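/- Identity for the l-range exclusion contribution: Let x ∈ 𝒮_hgt with interface y, let l ≥ 2 be an integer, and let b⊕_{·,l}, b⊖_{·,l} be nonnegative l-range branching rates. Call a half-integer k ⊕-eligible if x_m = 1 and x_{m−l} = 0 for all m ∈ {k, …, k+l−1}, and ⊖-eligible if x_m = 0 and x_{m−l} = 1 for all m ∈ {k, …, k+l−1}. Define (G^{ex_l} f_CD)(x) = Σ_k [b⊕_{k−1/2,l}(y)·(Π_{m=k}^{k+l−1} x_m(1−x_{m−l}))·(f_CD(x with the two blocks interchanged) − f_CD(x)) + b⊖_{k−1/2,l}(y)·(Π_{m=k}^{k+l−1} (1−x_m)x_{m−l})·(f_CD(x with the two blocks interchanged) − f_CD(x))] (a sum with finitely many nonzero terms). Then (G^{ex_l} f_CD)(x) = ch(y)·l²·(Σ_{k ⊕-eligible} b⊕_{k−1/2,l}(y) − Σ_{k ⊖-eligible} b⊖_{k−1/2,l}(y)). In particular, if all these rates are bounded by B̃(l), then |(G^{ex_l} f_CD)(x)| ≤ l²·B̃(l)·|y|. -/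

import Mathlib

open scoped BigOperators

/- Half-integers `k ∈ ℤ + 1/2` are represented by integers `j`, via `k = j + 1/2`.
A height configuration is a function `x : ℤ → ℤ` with values in `{0,1}`,
eventually constant in both directions with different limiting values. -/
def IsHeight (x : ℤ → ℤ) : Prop :=
  (∀ k, x k = 0 ∨ x k = 1) ∧
  ∃ a b : ℤ, a ≠ b ∧ (∃ N : ℤ, ∀ k ≤ N, x k = a) ∧ (∃ M : ℤ, ∀ k, M ≤ k → x k = b)

/-- The interface of a height configuration: `y i = x (i+1/2) - x (i-1/2)`. -/
def itf (x : ℤ → ℤ) : ℤ → ℤ := fun i => x i - x (i - 1)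

/-- The charge of a particle configuration. -/
noncomputable def charge (y : ℤ → ℤ) : ℤ := ∑ᶠ i, y i

/-- The particle number of a particle configuration. -/
noncomputable def pnum (y : ℤ → ℤ) : ℤ := ∑ᶠ i, |y i|

/-- `κ = (1 + ch(y))/2`. -/
noncomputable def kappa (x : ℤ → ℤ) : ℤ := (1 + charge (itf x)) / 2

/-- The inversion count `f_CD`. -/
noncomputable def fCD (x : ℤ → ℤ) : ℕ :=
  Nat.card {p : ℤ × ℤ // p.1 < p.2 ∧ x p.1 = kappa x ∧ x p.2 = 1 - kappa x}

/-- Flip the height at position `k`. -/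
def flipAt (x : ℤ → ℤ) (k : ℤ) : ℤ → ℤ := Function.update x k (1 - x k)

/-- Interchange the heights at positions `k` and `k+1`. -/
def swapAt (x : ℤ → ℤ) (k : ℤ) : ℤ → ℤ :=
  fun j => if j = k then x (k + 1) else if j = k + 1 then x k else x j

/-- `S(k) = Σ_{l<k} 1{x_l = κ} − Σ_{l>k} 1{x_l = 1−κ}`. -/
noncomputable def Sfun (x : ℤ → ℤ) (k : ℤ) : ℤ :=
  (Nat.card {l : ℤ // l < k ∧ x l = kappa x} : ℤ)
    - (Nat.card {l : ℤ // k < l ∧ x l = 1 - kappa x} : ℤ)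

/-- The spin-flip part of the generator applied to `f_CD`. -/
noncomputable def Gflip (p q : ℤ → ℝ) (x : ℤ → ℤ) : ℝ :=
  ∑ᶠ k : ℤ, (p k + q (k + 1)) * ((fCD (flipAt x k) : ℝ) - (fCD x : ℝ))

/-- The exclusion part of the generator applied to `f_CD`. -/
noncomputable def Gexcl (bp bm : ℤ → ℝ) (x : ℤ → ℤ) : ℝ :=
  ∑ᶠ k : ℤ,
    ((if x k = 0 ∧ x (k + 1) = 1 then bp (k + 1) else 0)
      + (if x k = 1 ∧ x (k + 1) = 0 then bm (k + 1) else 0))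
    * ((fCD (swapAt x k) : ℝ) - (fCD x : ℝ))

/-- Interchange the block of positions `[k, k+l)` with the block `[k−l, k)`. -/
def blockSwap (x : ℤ → ℤ) (k l : ℤ) : ℤ → ℤ :=
  fun j => if k ≤ j ∧ j < k + l then x (j - l)
    else if k - l ≤ j ∧ j < k then x (j + l) else x j

/-- `k` (representing the half-integer `k + 1/2`) is ⊕-eligible for range `l`:
a block of `l` ones immediately preceded by a block of `l` zeros. -/
def PlusEligible (x : ℤ → ℤ) (l k : ℤ) : Prop :=
  ∀ m, k ≤ m → m < k + l → x m = 1 ∧ x (m - l) = 0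

/-- `k` is ⊖-eligible for range `l`. -/
def MinusEligible (x : ℤ → ℤ) (l k : ℤ) : Prop :=
  ∀ m, k ≤ m → m < k + l → x m = 0 ∧ x (m - l) = 1

open scoped Classical in
/-- The `l`-range exclusion part of the generator applied to `f_CD`. -/
noncomputable def GexL (bpl bml : ℤ → ℝ) (x : ℤ → ℤ) (l : ℤ) : ℝ :=
  ∑ᶠ k : ℤ,
    ((if PlusEligible x l k then bpl k else 0)
      + (if MinusEligible x l k then bml k else 0))
    * ((fCD (blockSwap x k l) : ℝ) - (fCD x : ℝ))

/-!
A block swap permutes positions by an involution that preserves the relative order of every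
pair except the `l²` pairs with one point in each block. An eligible swap exchanges a block of
`c`s with a block of `1 - c`s, so `f_CD` changes by exactly `± l²`: all cross pairs are
inversions before the swap and none after, or the other way round. Since `κ = 1` exactly when
`ch(y) = 1`, this sign is `ch(y)` for a ⊕-swap and `-ch(y)` for a ⊖-swap. For the bound, every
eligible `k` carries a particle of the interface, `y_k = ±1`, so there are at most `|y|` of them.
-/

open Filter Function

def HasTails (x : ℤ → ℤ) (c : ℤ) : Prop :=
  (∀ᶠ j in atBot, x j = 1 - c) ∧ ∀ᶠ j in atTop, x j = c

def inversions (c : ℤ) (x : ℤ → ℤ) : Set (ℤ × ℤ) :=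
  {p | p.1 < p.2 ∧ x p.1 = c ∧ x p.2 = 1 - c}

def blockPerm (k l j : ℤ) : ℤ :=
  if k ≤ j ∧ j < k + l then j - l else if k - l ≤ j ∧ j < k then j + l else j

section Tails

variable {x : ℤ → ℤ} {c : ℤ}

lemma IsHeight.exists_hasTails (hx : IsHeight x) : ∃ c, (c = 0 ∨ c = 1) ∧ HasTails x c := by
  obtain ⟨hval, a, b, hab, ⟨N, hN⟩, ⟨M, hM⟩⟩ := hx
  have ha := hN N le_rfl ▸ hval N
  have hb := hM M le_rfl ▸ hval M
  refine ⟨b, hb, eventually_atBot.2 ⟨N, fun j hj => ?_⟩, eventually_atTop.2 ⟨M, hM⟩⟩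
  rw [hN j hj]
  omega

lemma HasTails.exists_bounds (h : HasTails x c) :
    ∃ N M, N ≤ M ∧ (∀ j ≤ N, x j = 1 - c) ∧ ∀ j, M ≤ j → x j = c := by
  obtain ⟨N, hN⟩ := eventually_atBot.1 h.1
  obtain ⟨M, hM⟩ := eventually_atTop.1 h.2
  exact ⟨min N M, M, min_le_right N M, fun j hj => hN j (hj.trans (min_le_left N M)), hM⟩

lemma support_itf_subset_Ioc {N M : ℤ} (hN : ∀ j ≤ N, x j = 1 - c) (hM : ∀ j, M ≤ j → x j = c) :
    support (itf x) ⊆ Set.Ioc N M := by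
  intro i hi
  by_contra hout
  rcases le_or_gt i N with hiN | hMi
  · exact hi (by rw [itf, hN i hiN, hN (i - 1) (by omega), sub_self])
  · exact hi (by rw [itf, hM i (by grind), hM (i - 1) (by grind), sub_self])

lemma HasTails.finite_support_itf (h : HasTails x c) : (support (itf x)).Finite := by
  obtain ⟨N, M, -, hN, hM⟩ := h.exists_bounds
  exact (Set.finite_Ioc N M).subset (support_itf_subset_Ioc hN hM)

lemma sum_Ioc_sub_pred {G : Type*} [AddCommGroup G] (f : ℤ → G) {N M : ℤ} (hNM : N ≤ M) :
    ∑ i ∈ Finset.Ioc N M, (f i - f (i - 1)) = f M - f N := by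
  induction M, hNM using Int.leInduction with
  | base => simp
  | succ M hNM ih =>
    rw [← Finset.insert_Ioc_right_eq_Ioc_add_one hNM, Finset.sum_insert (by simp), ih,
      add_sub_cancel_right, sub_add_sub_cancel]

lemma HasTails.charge_itf (h : HasTails x c) : charge (itf x) = 2 * c - 1 := by
  obtain ⟨N, M, hNM, hN, hM⟩ := h.exists_bounds
  rw [charge, finsum_eq_sum_of_support_subset _ (s := Finset.Ioc N M)
    (by simpa using support_itf_subset_Ioc hN hM)]
  simp only [itf]
  rw [sum_Ioc_sub_pred x hNM, hM M le_rfl, hN N le_rfl]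
  ring

lemma HasTails.kappa_eq (h : HasTails x c) : kappa x = c := by
  rw [kappa, h.charge_itf]
  omega

lemma HasTails.finite_inversions (h : HasTails x c) : (inversions c x).Finite := by
  obtain ⟨N, M, -, hN, hM⟩ := h.exists_bounds
  refine ((Set.finite_Icc N M).prod (Set.finite_Icc N M)).subset ?_
  rintro ⟨u, v⟩ ⟨huv, hu, hv⟩
  have hNu : N < u := by
    by_contra!
    rw [hN u this] at hu
    omega
  have hvM : v < M := by
    by_contra!
    rw [hM v this] at hv
    omega
  exact ⟨⟨hNu.le, by omega⟩, ⟨by omega, hvM.le⟩⟩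

lemma HasTails.blockSwap (h : HasTails x c) (k l : ℤ) : HasTails (blockSwap x k l) c := by
  constructor
  · filter_upwards [h.1, eventually_lt_atBot k, eventually_lt_atBot (k - l)] with j hj hk hkl
    rwa [_root_.blockSwap, if_neg (by omega), if_neg (by omega)]
  · filter_upwards [h.2, eventually_ge_atTop k, eventually_ge_atTop (k + l)] with j hj hk hkl
    rwa [_root_.blockSwap, if_neg (by omega), if_neg (by omega)]

end Tails

lemma ncard_Ico_prod_Ico {a b c d : ℤ} (hab : a ≤ b) (hcd : c ≤ d) :
    ((Set.Ico a b ×ˢ Set.Ico c d).ncard : ℤ) = (b - a) * (d - c) := by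
  rw [Set.ncard_prod, ← Nat.card_coe_set_eq, ← Nat.card_coe_set_eq, Nat.card_eq_fintype_card,
    Nat.card_eq_fintype_card, Nat.cast_mul, Int.card_fintype_Ico_of_le _ _ hab,
    Int.card_fintype_Ico_of_le _ _ hcd]

section BlockSwap

variable {x : ℤ → ℤ} {k l : ℤ}

lemma blockSwap_eq_comp (x : ℤ → ℤ) (k l : ℤ) : blockSwap x k l = x ∘ blockPerm k l := by
  funext j
  simp only [blockSwap, blockPerm, Function.comp_apply]
  split_ifs <;> rfl

lemma blockPerm_involutive : Involutive (blockPerm k l) := by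
  intro j
  unfold blockPerm
  split_ifs <;> omega

lemma blockSwap_blockSwap : blockSwap (blockSwap x k l) k l = x := by
  rw [blockSwap_eq_comp, blockSwap_eq_comp, Function.comp_assoc,
    blockPerm_involutive.comp_self, Function.comp_id]

lemma blockSwap_apply_of_left {j : ℤ} (hj : k - l ≤ j) (hjk : j < k) :
    blockSwap x k l j = x (j + l) := by
  rw [blockSwap, if_neg (by omega), if_pos ⟨hj, hjk⟩]

lemma blockSwap_apply_of_right {j : ℤ} (hj : k ≤ j) (hjk : j < k + l) :
    blockSwap x k l j = x (j - l) := by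
  rw [blockSwap, if_pos ⟨hj, hjk⟩]

lemma blockPerm_lt_blockPerm_iff {u v : ℤ} (hu : ¬(k ≤ u ∧ u < k + l))
    (hv : ¬(k - l ≤ v ∧ v < k)) :
    blockPerm k l u < blockPerm k l v ↔ u < v ∧ ¬((k - l ≤ u ∧ u < k) ∧ k ≤ v ∧ v < k + l) := by
  unfold blockPerm
  split_ifs <;> omega

/-- `blockPerm` maps the inversions of the swapped configuration onto the inversions of `x`
that do not run between the two blocks. -/
lemma ncard_inversions_blockSwap_add_sq {c : ℤ} (hl : 0 ≤ l) (hfin : (inversions c x).Finite)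
    (hleft : ∀ j, k - l ≤ j → j < k → x j = c) (hright : ∀ j, k ≤ j → j < k + l → x j = 1 - c) :
    ((inversions c (blockSwap x k l)).ncard : ℤ) + l ^ 2 = (inversions c x).ncard := by
  set between : Set (ℤ × ℤ) := Set.Ico (k - l) k ×ˢ Set.Ico k (k + l)
  have hσ := blockPerm_involutive (k := k) (l := l)
  have hpre : inversions c (blockSwap x k l) =
      Prod.map (blockPerm k l) (blockPerm k l) ⁻¹' (inversions c x \ between) := by
    ext ⟨u, v⟩
    obtain ⟨u, rfl⟩ := hσ.surjective u
    obtain ⟨v, rfl⟩ := hσ.surjective v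
    simp only [inversions, blockSwap_eq_comp, between, Set.mem_ofPred_eq, Set.mem_preimage,
      Prod.map, Function.comp_apply, hσ _, Set.mem_sdiff, Set.mem_prod, Set.mem_Ico]
    have hu' : x u = c → ¬(k ≤ u ∧ u < k + l) := fun hu h => by
      have := hright u h.1 h.2
      omega
    have hv' : x v = 1 - c → ¬(k - l ≤ v ∧ v < k) := fun hv h => by
      have := hleft v h.1 h.2
      omega
    constructor
    · rintro ⟨huv, hu, hv⟩
      obtain ⟨huv', hbetween⟩ := (blockPerm_lt_blockPerm_iff (hu' hu) (hv' hv)).1 huv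
      exact ⟨⟨huv', hu, hv⟩, hbetween⟩
    · rintro ⟨⟨huv, hu, hv⟩, hbetween⟩
      exact ⟨(blockPerm_lt_blockPerm_iff (hu' hu) (hv' hv)).2 ⟨huv, hbetween⟩, hu, hv⟩
  have hsub : between ⊆ inversions c x := by
    rintro ⟨u, v⟩ ⟨⟨hu1, hu2⟩, hv1, hv2⟩
    exact ⟨by omega, hleft u hu1 hu2, hright v hv1 hv2⟩
  have hinj : Injective (Prod.map (blockPerm k l) (blockPerm k l)) :=
    hσ.injective.prodMap hσ.injective
  rw [hpre, Set.ncard_preimage_of_injective_subset_range hinj (by simp [hσ.surjective.range_eq]),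
    ← Set.ncard_sdiff_add_ncard_of_subset hsub hfin, Nat.cast_add,
    ncard_Ico_prod_Ico (by omega) (by omega)]
  ring

lemma fCD_eq_ncard_inversions (x : ℤ → ℤ) : fCD x = (inversions (kappa x) x).ncard :=
  Nat.card_coe_set_eq _

lemma fCD_blockSwap {d : ℤ} (hx : IsHeight x) (hl : 0 ≤ l) (hd : d = 0 ∨ d = 1)
    (hleft : ∀ j, k - l ≤ j → j < k → x j = 1 - d) (hright : ∀ j, k ≤ j → j < k + l → x j = d) :
    (fCD (blockSwap x k l) : ℤ) = fCD x + charge (itf x) * (2 * d - 1) * l ^ 2 := by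
  obtain ⟨c, hc, ht⟩ := hx.exists_hasTails
  rw [fCD_eq_ncard_inversions, fCD_eq_ncard_inversions, (ht.blockSwap k l).kappa_eq, ht.kappa_eq,
    ht.charge_itf]
  rcases (by omega : d = 1 - c ∨ d = c) with rfl | rfl
  · have := ncard_inversions_blockSwap_add_sq hl ht.finite_inversions
      (fun j h1 h2 => by rw [hleft j h1 h2]; ring) hright
    rcases hc with rfl | rfl <;> linarith
  · -- the swapped configuration has its blocks in the order treated above and swaps back to `x`
    have := ncard_inversions_blockSwap_add_sq hl (ht.blockSwap k l).finite_inversions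
      (fun j h1 h2 => by rw [blockSwap_apply_of_left h1 h2, hright _ (by omega) (by omega)])
      (fun j h1 h2 => by rw [blockSwap_apply_of_right h1 h2, hleft _ (by omega) (by omega)])
    rw [blockSwap_blockSwap] at this
    rcases hc with rfl | rfl <;> linarith

end BlockSwap

section Eligibility

variable {x : ℤ → ℤ} {l k : ℤ}

lemma PlusEligible.itf_eq_one (hl : 1 ≤ l) (h : PlusEligible x l k) : itf x k = 1 := by
  have hk := (h k le_rfl (by omega)).1
  have hk1 := (h (k + l - 1) (by omega) (by omega)).2
  rw [show k + l - 1 - l = k - 1 by ring] at hk1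
  rw [itf, hk, hk1]
  rfl

lemma MinusEligible.itf_eq_neg_one (hl : 1 ≤ l) (h : MinusEligible x l k) : itf x k = -1 := by
  have hk := (h k le_rfl (by omega)).1
  have hk1 := (h (k + l - 1) (by omega) (by omega)).2
  rw [show k + l - 1 - l = k - 1 by ring] at hk1
  rw [itf, hk, hk1]
  rfl

lemma PlusEligible.not_minusEligible (hl : 1 ≤ l) (h : PlusEligible x l k) :
    ¬MinusEligible x l k := fun h' => by
  have := h'.itf_eq_neg_one hl
  rw [h.itf_eq_one hl] at this
  omega

lemma PlusEligible.fCD_blockSwap (hx : IsHeight x) (hl : 0 ≤ l) (h : PlusEligible x l k) :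
    (fCD (blockSwap x k l) : ℝ) - fCD x = charge (itf x) * l ^ 2 := by
  have := _root_.fCD_blockSwap hx hl (d := 1) (by simp)
    (fun j h1 h2 => by simpa using (h (j + l) (by omega) (by omega)).2)
    (fun j h1 h2 => (h j h1 h2).1)
  rw [sub_eq_iff_eq_add']
  exact_mod_cast this.trans (by ring)

lemma MinusEligible.fCD_blockSwap (hx : IsHeight x) (hl : 0 ≤ l) (h : MinusEligible x l k) :
    (fCD (blockSwap x k l) : ℝ) - fCD x = -(charge (itf x) * l ^ 2) := by
  have := _root_.fCD_blockSwap hx hl (d := 0) (by simp)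
    (fun j h1 h2 => by simpa using (h (j + l) (by omega) (by omega)).2)
    (fun j h1 h2 => (h j h1 h2).1)
  rw [sub_eq_iff_eq_add']
  exact_mod_cast this.trans (by ring)

end Eligibility

lemma IsHeight.abs_charge_itf {x : ℤ → ℤ} (hx : IsHeight x) : |charge (itf x)| = 1 := by
  obtain ⟨c, hc, ht⟩ := hx.exists_hasTails
  rw [ht.charge_itf]
  rcases hc with rfl | rfl <;> rfl

lemma IsHeight.finite_support_itf {x : ℤ → ℤ} (hx : IsHeight x) :
    (support (itf x)).Finite := by
  obtain ⟨c, -, ht⟩ := hx.exists_hasTails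
  exact ht.finite_support_itf

section Generator

open scoped Classical

variable {x : ℤ → ℤ} {l : ℤ}

lemma hasFiniteSupport_ite_plusEligible {M : Type*} [Zero M] (hl : 1 ≤ l)
    (hy : (support (itf x)).Finite) (f : ℤ → M) :
    HasFiniteSupport fun k => if PlusEligible x l k then f k else 0 :=
  hy.subset fun k hk => by
    by_cases h : PlusEligible x l k
    · simp [h.itf_eq_one hl]
    · simp [h] at hk

lemma hasFiniteSupport_ite_minusEligible {M : Type*} [Zero M] (hl : 1 ≤ l)
    (hy : (support (itf x)).Finite) (f : ℤ → M) :
    HasFiniteSupport fun k => if MinusEligible x l k then f k else 0 :=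
  hy.subset fun k hk => by
    by_cases h : MinusEligible x l k
    · simp [h.itf_eq_neg_one hl]
    · simp [h] at hk

lemma GexL_summand_eq (hx : IsHeight x) (hl : 1 ≤ l) (bpl bml : ℤ → ℝ) (k : ℤ) :
    ((if PlusEligible x l k then bpl k else 0) + (if MinusEligible x l k then bml k else 0))
        * ((fCD (blockSwap x k l) : ℝ) - fCD x) =
      charge (itf x) * l ^ 2 *
        ((if PlusEligible x l k then bpl k else 0) - if MinusEligible x l k then bml k else 0) := by
  by_cases hp : PlusEligible x l k
  · rw [if_pos hp, if_neg (hp.not_minusEligible hl), hp.fCD_blockSwap hx (by omega)]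
    ring
  by_cases hm : MinusEligible x l k
  · rw [if_neg hp, if_pos hm, hm.fCD_blockSwap hx (by omega)]
    ring
  · simp [hp, hm]

lemma GexL_eq (hx : IsHeight x) (hl : 1 ≤ l) (bpl bml : ℤ → ℝ) :
    GexL bpl bml x l = charge (itf x) * l ^ 2 *
      ((∑ᶠ k, if PlusEligible x l k then bpl k else 0) -
        ∑ᶠ k, if MinusEligible x l k then bml k else 0) := by
  rw [GexL, finsum_congr (GexL_summand_eq hx hl bpl bml), ← mul_finsum,
    finsum_sub_distrib (hasFiniteSupport_ite_plusEligible hl hx.finite_support_itf bpl)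
      (hasFiniteSupport_ite_minusEligible hl hx.finite_support_itf bml)]

lemma finsum_eligible_add_finsum_eligible_le (hx : IsHeight x) (hl : 1 ≤ l) {bpl bml : ℤ → ℝ}
    {B : ℝ} (hB0 : 0 ≤ B) (hB : ∀ k, bpl k ≤ B ∧ bml k ≤ B) :
    (∑ᶠ k, if PlusEligible x l k then bpl k else 0) +
        (∑ᶠ k, if MinusEligible x l k then bml k else 0) ≤ B * pnum (itf x) := by
  have hP := hasFiniteSupport_ite_plusEligible hl hx.finite_support_itf bpl
  have hM := hasFiniteSupport_ite_minusEligible hl hx.finite_support_itf bml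
  have hitf : HasFiniteSupport fun k => |itf x k| :=
    hx.finite_support_itf.subset fun k hk h0 => hk (by simp [h0])
  have hpnum : (pnum (itf x) : ℝ) = ∑ᶠ k, (|itf x k| : ℝ) := by
    simpa [pnum] using map_finsum (Int.castAddHom ℝ) hitf
  rw [← finsum_add_distrib hP hM, hpnum, mul_finsum]
  refine finsum_le_finsum' (hP.add hM) ?_ fun k => ?_
  · exact hx.finite_support_itf.subset fun k hk h0 => hk (by simp [h0])
  by_cases hp : PlusEligible x l k
  · simp [hp, hp.not_minusEligible hl, hp.itf_eq_one hl, hB k]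
  by_cases hm : MinusEligible x l k
  · simp [hp, hm, hm.itf_eq_neg_one hl, hB k]
  · simp only [hp, hm, if_false, add_zero]
    positivity

end Generator

open scoped Classical in
/-- Identity for the `l`-range exclusion contribution, and the resulting bound
for rates bounded by `B̃(l)`. -/
theorem lrange_exclusion_identity
    (x : ℤ → ℤ) (hx : IsHeight x) (l : ℤ) (hl : 2 ≤ l)
    (bpl bml : ℤ → ℝ) (hbpl : ∀ k, 0 ≤ bpl k) (hbml : ∀ k, 0 ≤ bml k) :
    GexL bpl bml x l = (charge (itf x) : ℝ) * (l : ℝ) ^ 2 *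
        ((∑ᶠ k : ℤ, if PlusEligible x l k then bpl k else 0)
          - ∑ᶠ k : ℤ, if MinusEligible x l k then bml k else 0) ∧
    ∀ Btil : ℝ, (∀ k, bpl k ≤ Btil ∧ bml k ≤ Btil) →
      |GexL bpl bml x l| ≤ (l : ℝ) ^ 2 * Btil * (pnum (itf x) : ℝ) := by
  have hl1 : 1 ≤ l := by omega
  refine ⟨GexL_eq hx hl1 bpl bml, fun Btil hB => ?_⟩
  have hP : 0 ≤ ∑ᶠ k, if PlusEligible x l k then bpl k else 0 :=
    finsum_nonneg fun k => by split_ifs <;> simp [hbpl k]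
  have hM : 0 ≤ ∑ᶠ k, if MinusEligible x l k then bml k else 0 :=
    finsum_nonneg fun k => by split_ifs <;> simp [hbml k]
  have hcharge : |(charge (itf x) : ℝ)| = 1 := by exact_mod_cast hx.abs_charge_itf
  calc |GexL bpl bml x l|
      = (l : ℝ) ^ 2 * |(∑ᶠ k, if PlusEligible x l k then bpl k else 0) -
          ∑ᶠ k, if MinusEligible x l k then bml k else 0| := by
        rw [GexL_eq hx hl1, abs_mul, abs_mul, hcharge, one_mul, abs_sq]
    _ ≤ (l : ℝ) ^ 2 * ((∑ᶠ k, if PlusEligible x l k then bpl k else 0) +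
          ∑ᶠ k, if MinusEligible x l k then bml k else 0) := by
        gcongr
        exact (abs_sub _ _).trans_eq (by rw [abs_of_nonneg hP, abs_of_nonneg hM])
    _ ≤ (l : ℝ) ^ 2 * (Btil * pnum (itf x)) := by
        gcongr
        exact finsum_eligible_add_finsum_eligible_le hx hl1 ((hbpl 0).trans (hB 0).1) hB
    _ = (l : ℝ) ^ 2 * Btil * pnum (itf x) := by ring
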